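/- arXiv:2302.11444 — 5 statements merged into one kernel-verified Lean document; each statement's English description precedes it below -/
import Mathlib

section
/- For integers l, q ≥ 0 and any complex number s, the identity ∑_{i+j=q, i,j≥0} (-1)^j · C(q,i) · (s-j)_{l+q} = (l+1)_q · (s)_l holds, where (x)_n denotes the rising Pochhammer symbol (x)_0 = 1, (x)_n = x(x+1)···(x+n-1). -/
open Finset Polynomial

private lemma asc_diff (n : ℕ) (x : ℂ) :
    (ascPochhammer ℂ (n+1)).eval x - (ascPochhammer ℂ (n+1)).eval (x-1)
    = (n+1) * (ascPochhammer ℂ n).eval x := by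
  have h1 := ascPochhammer_succ_eval (S := ℂ) n x
  have h2 : (ascPochhammer ℂ (n+1)).eval (x-1) = (x-1) * (ascPochhammer ℂ n).eval x := by
    rw [ascPochhammer_succ_left]
    simp [eval_comp]
  rw [h1, h2]; ring

private lemma sum_step (q : ℕ) (P : ℂ → ℂ) (s : ℂ) :
    ∑ j ∈ range (q+2), (-1:ℂ)^j * ((q+1).choose j) * P (s - j)
    = ∑ j ∈ range (q+1), (-1:ℂ)^j * (q.choose j) * (P (s - j) - P (s - j - 1)) := by
  rw [Finset.sum_range_succ']
  have hsplit : ∀ i ∈ range (q+1),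
      (-1:ℂ)^(i+1) * (((q+1).choose (i+1) : ℕ) : ℂ) * P (s - (i+1 : ℕ))
      = (-1:ℂ)^(i+1) * (q.choose i) * P (s - i - 1)
        + (-1:ℂ)^(i+1) * (q.choose (i+1)) * P (s - (i+1:ℕ)) := by
    intro i _
    have ha : s - ((i:ℕ)+1 : ℕ) = s - i - 1 := by push_cast; ring
    rw [Nat.choose_succ_succ, ha]
    push_cast
    ring
  rw [Finset.sum_congr rfl hsplit, Finset.sum_add_distrib]
  have h2 : ∑ i ∈ range (q+1), (-1:ℂ)^(i+1) * (q.choose (i+1)) * P (s - ((i:ℕ)+1:ℕ))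
        + (-1:ℂ)^0 * (((q+1).choose 0 : ℕ):ℂ) * P (s - ((0:ℕ):ℂ))
      = ∑ j ∈ range (q+1), (-1:ℂ)^j * (q.choose j) * P (s - j) := by
    have h := (Finset.sum_range_succ' (fun j => (-1:ℂ)^j * (q.choose j) * P (s - j)) (q+1)).symm
    conv_rhs at h => rw [Finset.sum_range_succ]
    simp only [Nat.choose_succ_self, Nat.cast_zero, mul_zero, zero_mul, add_zero] at h
    simpa using h
  rw [add_assoc, h2]
  simp only [mul_sub]
  rw [Finset.sum_sub_distrib]
  have h3 : ∑ i ∈ range (q+1), (-1:ℂ)^(i+1) * (q.choose i) * P (s - i - 1)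
      = - ∑ i ∈ range (q+1), (-1:ℂ)^i * (q.choose i) * P (s - i - 1) := by
    rw [← Finset.sum_neg_distrib]
    apply Finset.sum_congr rfl
    intro i _
    ring
  rw [h3]
  ring

/-- For integers `l, q ≥ 0` and `s ∈ ℂ`,
`∑_{i+j=q} (-1)^j C(q,i) (s-j)_{l+q} = (l+1)_q (s)_l`,
where `(x)_n` is the rising Pochhammer symbol. -/
theorem sum_pochhammer_identity (l q : ℕ) (s : ℂ) :
    ∑ j ∈ Finset.range (q + 1),
      (-1 : ℂ) ^ j * (q.choose j) * (ascPochhammer ℂ (l + q)).eval (s - j)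
      = (ascPochhammer ℂ q).eval ((l : ℂ) + 1) * (ascPochhammer ℂ l).eval s := by
  induction q with
  | zero => simp
  | succ q ih =>
    have hl : l + (q + 1) = (l + q) + 1 := by omega
    rw [hl]
    have := sum_step q (fun x => (ascPochhammer ℂ ((l+q)+1)).eval x) s
    rw [show q + 1 + 1 = q + 2 from rfl, this]
    have hd : ∀ j ∈ range (q+1),
        (-1:ℂ)^j * (q.choose j) *
          ((ascPochhammer ℂ ((l+q)+1)).eval (s - j) - (ascPochhammer ℂ ((l+q)+1)).eval (s - j - 1))
        = ((l:ℂ) + q + 1) * ((-1:ℂ)^j * (q.choose j) * (ascPochhammer ℂ (l+q)).eval (s - j)) := by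
      intro j _
      rw [asc_diff (l+q) (s - j)]
      push_cast
      ring
    rw [Finset.sum_congr rfl hd, ← Finset.mul_sum, ih, ascPochhammer_succ_eval]
    ring
end

section
/- For an integer n ≥ 2, the limit as s → 1 of (s-1)·ζ₂(n, s) equals ζ(n). -/
/-!
Summing over `n₂` first,
`ζ₂(s₁, s) = ∑ₐ a^{-s₁} (ζ(s) - ∑_{i ≤ a} i^{-s}) = ζ(s₁) ζ(s) - D(s₁, s)` with `D = zeta2Defect`.
Since `ζ` has residue `1` at `s = 1`, `(s - 1) ζ(s₁) ζ(s) → ζ(s₁)`, while `D(s₁, s)` stays bounded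
for `Re s ≥ 1`: there `|∑_{i ≤ a} i^{-s}| ≤ 1 + log a`, and `∑ₐ a^{-Re s₁} (1 + log a) < ∞`.
-/

open Filter

/-- The Euler–Zagier double zeta function
`ζ₂(s₁,s₂) = ∑_{0<n₁<n₂} n₁^{-s₁} n₂^{-s₂}` (as a sum over pairs). -/
noncomputable def zeta2 (s₁ s₂ : ℂ) : ℂ :=
  ∑' p : ℕ × ℕ, 1 / (((p.1 + 1 : ℕ) : ℂ) ^ s₁ * ((p.1 + p.2 + 2 : ℕ) : ℂ) ^ s₂)

open Topology

lemma norm_one_div_natCast_add_one_cpow (a : ℕ) (s : ℂ) :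
    ‖1 / ((a : ℂ) + 1) ^ s‖ = 1 / ((a : ℝ) + 1) ^ s.re := by
  have := Complex.norm_natCast_cpow_of_pos a.succ_pos s
  push_cast at this
  rw [norm_div, norm_one, this]

lemma summable_one_div_nat_add_one_rpow {p : ℝ} (hp : 1 < p) :
    Summable fun a : ℕ => 1 / ((a : ℝ) + 1) ^ p := by
  have habs (a : ℕ) : |(a : ℝ) + 1| = a + 1 := abs_of_nonneg (by positivity)
  simpa [habs] using (Real.summable_one_div_nat_add_rpow 1 p).2 hp

lemma summable_one_add_log_div_rpow {σ : ℝ} (hσ : 1 < σ) :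
    Summable fun a : ℕ => (1 + Real.log ((a : ℝ) + 1)) / ((a : ℝ) + 1) ^ σ := by
  obtain ⟨ε, hε, hσε⟩ : ∃ ε : ℝ, 0 < ε ∧ 1 < σ - ε := ⟨(σ - 1) / 2, by linarith, by linarith⟩
  have hbound (a : ℕ) : (1 + Real.log ((a : ℝ) + 1)) / ((a : ℝ) + 1) ^ σ ≤
      1 / ((a : ℝ) + 1) ^ σ + ε⁻¹ * (1 / ((a : ℝ) + 1) ^ (σ - ε)) := by
    have ha : (0 : ℝ) < (a : ℝ) + 1 := by positivity
    calc (1 + Real.log ((a : ℝ) + 1)) / ((a : ℝ) + 1) ^ σ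
        ≤ (1 + ((a : ℝ) + 1) ^ ε / ε) / ((a : ℝ) + 1) ^ σ := by
          gcongr; exact Real.log_le_rpow_div ha.le hε
      _ = _ := by rw [Real.rpow_sub ha]; field_simp
  have hnonneg (a : ℕ) : 0 ≤ (1 + Real.log ((a : ℝ) + 1)) / ((a : ℝ) + 1) ^ σ :=
    div_nonneg (add_nonneg zero_le_one (Real.log_nonneg (by simp))) (by positivity)
  refine Summable.of_nonneg_of_le hnonneg hbound ?_
  exact (summable_one_div_nat_add_one_rpow hσ).add
    ((summable_one_div_nat_add_one_rpow hσε).mul_left _)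

noncomputable def zetaPartialSum (s : ℂ) (m : ℕ) : ℂ :=
  ∑ i ∈ Finset.range m, 1 / ((i : ℂ) + 1) ^ s

lemma norm_zetaPartialSum_le {s : ℂ} (hs : 1 ≤ s.re) (m : ℕ) :
    ‖zetaPartialSum s m‖ ≤ 1 + Real.log m := by
  calc ‖zetaPartialSum s m‖ ≤ ∑ i ∈ Finset.range m, 1 / ((i : ℝ) + 1) ^ s.re := by
        simpa only [zetaPartialSum, norm_one_div_natCast_add_one_cpow] using
          norm_sum_le (Finset.range m) fun i : ℕ => 1 / ((i : ℂ) + 1) ^ s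
    _ ≤ ∑ i ∈ Finset.range m, 1 / ((i : ℝ) + 1) := by
        gcongr with i
        exact Real.self_le_rpow_of_one_le (by simp) hs
    _ = harmonic m := by simp [harmonic, one_div]
    _ ≤ 1 + Real.log m := harmonic_le_one_add_log m

lemma hasSum_one_div_nat_add_one_cpow {s : ℂ} (hs : 1 < s.re) :
    HasSum (fun k : ℕ => 1 / ((k : ℂ) + 1) ^ s) (riemannZeta s) := by
  rw [zeta_eq_tsum_one_div_nat_add_one_cpow hs]
  refine Summable.hasSum (.of_norm ?_)
  simpa only [norm_one_div_natCast_add_one_cpow] using summable_one_div_nat_add_one_rpow hs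

lemma hasSum_zeta_tail {s : ℂ} (hs : 1 < s.re) (m : ℕ) :
    HasSum (fun k : ℕ => 1 / (((k + m : ℕ) : ℂ) + 1) ^ s) (riemannZeta s - zetaPartialSum s m) :=
  (hasSum_nat_add_iff' m).2 (hasSum_one_div_nat_add_one_cpow hs)

lemma zeta2_term_eq (s₁ s : ℂ) (a b : ℕ) :
    1 / (((a + 1 : ℕ) : ℂ) ^ s₁ * ((a + b + 2 : ℕ) : ℂ) ^ s) =
      1 / ((a : ℂ) + 1) ^ s₁ * (1 / (((b + (a + 1) : ℕ) : ℂ) + 1) ^ s) := by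
  rw [one_div_mul_one_div]
  push_cast
  ring_nf

lemma summable_zeta2_term {s₁ s : ℂ} (hs₁ : 1 < s₁.re) (hs : 1 < s.re) :
    Summable fun p : ℕ × ℕ => 1 / (((p.1 + 1 : ℕ) : ℂ) ^ s₁ * ((p.1 + p.2 + 2 : ℕ) : ℂ) ^ s) := by
  have hprod : Summable fun p : ℕ × ℕ =>
      1 / ((p.1 : ℝ) + 1) ^ s₁.re * (1 / ((p.2 : ℝ) + 1) ^ s.re) :=
    (summable_one_div_nat_add_one_rpow hs₁).mul_of_nonneg
      (summable_one_div_nat_add_one_rpow hs) (fun _ => by positivity) (fun _ => by positivity)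
  refine .of_norm_bounded hprod fun ⟨a, b⟩ => ?_
  rw [zeta2_term_eq, norm_mul, norm_one_div_natCast_add_one_cpow,
    norm_one_div_natCast_add_one_cpow]
  gcongr
  push_cast
  linarith

/-- By the stuffle relation this is `ζ₂(s, s₁) + ζ(s₁ + s)`; only its boundedness as `s → 1`
matters here. -/
noncomputable def zeta2Defect (s₁ s : ℂ) : ℂ :=
  ∑' a : ℕ, 1 / ((a : ℂ) + 1) ^ s₁ * zetaPartialSum s (a + 1)

lemma norm_zeta2Defect_term_le (s₁ : ℂ) {s : ℂ} (hs : 1 ≤ s.re) (a : ℕ) :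
    ‖1 / ((a : ℂ) + 1) ^ s₁ * zetaPartialSum s (a + 1)‖ ≤
      (1 + Real.log ((a : ℝ) + 1)) / ((a : ℝ) + 1) ^ s₁.re := by
  rw [norm_mul, norm_one_div_natCast_add_one_cpow, one_div_mul_eq_div]
  gcongr
  exact_mod_cast norm_zetaPartialSum_le hs (a + 1)

lemma summable_zeta2Defect_term {s₁ s : ℂ} (hs₁ : 1 < s₁.re) (hs : 1 ≤ s.re) :
    Summable fun a : ℕ => 1 / ((a : ℂ) + 1) ^ s₁ * zetaPartialSum s (a + 1) :=
  .of_norm_bounded (summable_one_add_log_div_rpow hs₁) (norm_zeta2Defect_term_le s₁ hs)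

lemma norm_zeta2Defect_le {s₁ s : ℂ} (hs₁ : 1 < s₁.re) (hs : 1 ≤ s.re) :
    ‖zeta2Defect s₁ s‖ ≤ ∑' a : ℕ, (1 + Real.log ((a : ℝ) + 1)) / ((a : ℝ) + 1) ^ s₁.re :=
  tsum_of_norm_bounded (summable_one_add_log_div_rpow hs₁).hasSum (norm_zeta2Defect_term_le s₁ hs)

lemma zeta2_eq_mul_sub_zeta2Defect {s₁ s : ℂ} (hs₁ : 1 < s₁.re) (hs : 1 < s.re) :
    zeta2 s₁ s = riemannZeta s₁ * riemannZeta s - zeta2Defect s₁ s := by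
  have hfiber (a : ℕ) :
      HasSum (fun b : ℕ => 1 / (((a + 1 : ℕ) : ℂ) ^ s₁ * ((a + b + 2 : ℕ) : ℂ) ^ s))
        (1 / ((a : ℂ) + 1) ^ s₁ * (riemannZeta s - zetaPartialSum s (a + 1))) := by
    simpa only [zeta2_term_eq] using (hasSum_zeta_tail hs (a + 1)).mul_left _
  have hrows := (summable_zeta2_term hs₁ hs).hasSum.prod_fiberwise hfiber
  have hsplit :
      HasSum (fun a : ℕ => 1 / ((a : ℂ) + 1) ^ s₁ * (riemannZeta s - zetaPartialSum s (a + 1)))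
        (riemannZeta s₁ * riemannZeta s - zeta2Defect s₁ s) := by
    simp_rw [mul_sub]
    exact ((hasSum_one_div_nat_add_one_cpow hs₁).mul_right _).sub
      (summable_zeta2Defect_term hs₁ hs.le).hasSum
  exact hrows.unique hsplit

lemma tendsto_sub_one_mul_zeta2Defect {s₁ : ℂ} (hs₁ : 1 < s₁.re) :
    Tendsto (fun s => (s - 1) * zeta2Defect s₁ s) (𝓝[{s | 1 ≤ s.re}] 1) (𝓝 0) :=
  (tendsto_sub_nhds_zero_iff.2 <| tendsto_id.mono_left nhdsWithin_le_nhds)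
    |>.zero_mul_isBoundedUnder_le
      ⟨_, eventually_map.2 <| eventually_nhdsWithin_of_forall fun _ hs =>
        norm_zeta2Defect_le hs₁ hs⟩

/-- For `n ≥ 2`, `lim_{s → 1} (s-1) ζ₂(n, s) = ζ(n)`. -/
theorem tendsto_sub_one_mul_zeta2 (n : ℕ) (hn : 2 ≤ n) :
    Tendsto (fun s : ℂ => (s - 1) * zeta2 (n : ℂ) s)
      (nhdsWithin 1 {s : ℂ | 1 < s.re}) (nhds (riemannZeta n)) := by
  have hn' : 1 < (n : ℂ).re := by rw [Complex.natCast_re]; exact_mod_cast hn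
  have hpole : Tendsto (fun s => (s - 1) * riemannZeta s) (𝓝[{s | 1 < s.re}] 1) (𝓝 1) :=
    riemannZeta_residue_one.mono_left <| nhdsWithin_mono 1 fun s hs h => by simp_all
  have hdefect := (tendsto_sub_one_mul_zeta2Defect hn').mono_left <|
    nhdsWithin_mono 1 fun s (hs : 1 < s.re) => hs.le
  have hlim := (hpole.const_mul (riemannZeta n)).sub hdefect
  rw [mul_one, sub_zero] at hlim
  refine hlim.congr' ?_
  filter_upwards [self_mem_nhdsWithin] with s hs
  rw [zeta2_eq_mul_sub_zeta2Defect hn' hs]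
  ring
end

section
/- Let a : ℕ → ℚ and f(z) = ∑_{k≥0} a(k) z^k/k! ∈ ℚ[[z]]. Suppose F : ⋃_{r≥1} ℕ^r → ℚ satisfies, for each r ≥ 1, the generating-function identity ∑_{k₁,…,k_r ≥ 0} (z₁^{k₁}···z_r^{k_r})/(k₁!···k_r!) F(k₁,…,k_r) = f(z_r)·f(z_{r-1}+z_r)···f(z₁+···+z_r) as formal power series. Then for all r ≥ 1 and k₁,…,k_r ∈ ℕ, F(k₁,…,k_r) equals the constant term (evaluation at z = 0) of the iterated expression ∂_z^{k_r}[ f(z) ∂_z^{k_{r-1}}[ f(z) ··· ∂_z^{k₁}[f(z)] ··· ] ]. -/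
/-- The iterated expression `∂^{k_r}[ f · ∂^{k_{r-1}}[ f ⋯ ∂^{k₁}[f] ⋯ ] ]`,
where the list of exponents is given in the reversed order `[k_r, …, k₁]`. -/
noncomputable def iterExpr (f : PowerSeries ℚ) : List ℕ → PowerSeries ℚ
  | [] => 1
  | k :: ks => PowerSeries.derivativeFun^[k] (f * iterExpr f ks)

/-!
Expand the iterated expression by the general Leibniz rule. Each of the `k_j` derivatives of
`∂^{k_j}` falls on one of the factors `f` standing inside it, i.e. on the `i`-th factor for some
`i ≤ j`. Recording the number `ν i j` of those landing on the `i`-th factor gives an upper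
triangular array with column sums `k_j`; it occurs with weight `∏_j multinomial (column j)`, and
the `i`-th factor becomes `f^{(row sum i)}`, whose constant term is `a (row sum i)`. This is
exactly the coefficientwise form of the generating-function identity. By induction on `r`:
peeling off the outermost `∂^{k_r}` distributes its derivatives over the `r` factors, which
appends the last column to the array.
-/

open Finset PowerSeries

namespace Derivation

variable {R A : Type*} [CommSemiring R] [CommSemiring A] [Algebra R A] (D : Derivation R A A)

theorem iterate_apply_mul (n : ℕ) (a b : A) :
    D^[n] (a * b) = ∑ ij ∈ antidiagonal n, n.choose ij.1 • (D^[ij.1] a * D^[ij.2] b) := by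
  induction n with
  | zero => simp
  | succ n ih =>
    rw [sum_antidiagonal_choose_succ_nsmul (fun i j => D^[i] a * D^[j] b) n]
    simp only [Function.iterate_succ_apply', ih, map_sum, map_nsmul, leibniz, smul_eq_mul,
      smul_add, sum_add_distrib]
    congr 1
    refine sum_congr rfl fun ⟨i, j⟩ hij => ?_
    rw [n.choose_symm_of_eq_add (mem_antidiagonal.1 hij).symm]
    ring

theorem iterate_apply_prod {ι : Type*} [DecidableEq ι] (s : Finset ι) (g : ι → A) (n : ℕ) :
    D^[n] (∏ i ∈ s, g i) =
      ∑ w ∈ s.piAntidiag n, Nat.multinomial s w • ∏ i ∈ s, D^[w i] (g i) := by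
  induction s using Finset.cons_induction generalizing n with
  | empty => cases n <;> simp [iterate_map_zero]
  | cons a s ha ih =>
    rw [prod_cons, iterate_apply_mul, piAntidiag_cons, sum_disjiUnion]
    refine sum_congr rfl fun ⟨p, q⟩ hpq => ?_
    rw [HasAntidiagonal.mem_antidiagonal] at hpq
    rw [ih, mul_sum, smul_sum, sum_map]
    refine sum_congr rfl fun w hw => ?_
    rw [mem_piAntidiag] at hw
    have hwa : w a = 0 := by_contra fun h => ha (hw.2 a h)
    have hws : ∀ i ∈ s, (w + fun t => if t = a then p else 0) i = w i := fun i hi => by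
      simp [ne_of_mem_of_not_mem hi ha]
    simp only [addRightEmbedding_apply, Nat.multinomial_cons, prod_cons]
    rw [Nat.multinomial_congr hws, sum_congr rfl hws,
      prod_congr rfl fun i hi => congrArg (fun m => D^[m] (g i)) (hws i hi)]
    simp only [Pi.add_apply, hwa, if_pos, zero_add, hw.1, hpq]
    rw [mul_smul_comm, smul_smul, mul_comm]

end Derivation

set_option linter.deprecated false in
theorem PowerSeries.derivativeFun_eq_coe_derivative {R : Type*} [CommSemiring R] :
    (derivativeFun : R⟦X⟧ → R⟦X⟧) = ⇑(d⁄dX R) := rfl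

theorem Nat.multinomial_univ_snoc_zero {n : ℕ} (v : Fin n → ℕ) :
    Nat.multinomial univ (Fin.snoc v 0 : Fin (n + 1) → ℕ) = Nat.multinomial univ v := by
  simp [Nat.multinomial, Fin.sum_univ_castSucc, Fin.prod_univ_castSucc]

def upperTriangularArrays {r : ℕ} (k : Fin r → ℕ) : Finset (Fin r → Fin r → ℕ) :=
  (Fintype.piFinset fun _ : Fin r =>
      Fintype.piFinset fun j : Fin r => Finset.range (k j + 1)).filter
    (fun ν => (∀ i j : Fin r, j < i → ν i j = 0) ∧ ∀ j : Fin r, (∑ i : Fin r, ν i j) = k j)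

theorem mem_upperTriangularArrays {r : ℕ} {k : Fin r → ℕ} {ν : Fin r → Fin r → ℕ} :
    ν ∈ upperTriangularArrays k ↔
      (∀ i j : Fin r, j < i → ν i j = 0) ∧ ∀ j : Fin r, ∑ i, ν i j = k j := by
  refine ⟨fun h => (mem_filter.mp h).2, fun h => mem_filter.mpr ⟨?_, h⟩⟩
  simp only [Fintype.mem_piFinset, mem_range, Nat.lt_succ_iff]
  intro i j
  exact h.2 j ▸ single_le_sum (f := fun i => ν i j) (fun _ _ => Nat.zero_le _) (mem_univ i)

/-- `ν` bordered by a zero last row and then by the last column `w`. -/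
def appendColumn {r : ℕ} (ν : Fin r → Fin r → ℕ) (w : Fin (r + 1) → ℕ) :
    Fin (r + 1) → Fin (r + 1) → ℕ :=
  fun i => Fin.snoc (Fin.lastCases 0 ν i) (w i)

section appendColumn

variable {r : ℕ} (ν : Fin r → Fin r → ℕ) (w : Fin (r + 1) → ℕ)

@[simp]
theorem appendColumn_apply_last (i : Fin (r + 1)) : appendColumn ν w i (Fin.last r) = w i := by
  simp [appendColumn]

@[simp]
theorem appendColumn_castSucc_castSucc (i j : Fin r) :
    appendColumn ν w i.castSucc j.castSucc = ν i j := by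
  simp [appendColumn]

@[simp]
theorem appendColumn_last_castSucc (j : Fin r) : appendColumn ν w (Fin.last r) j.castSucc = 0 := by
  simp [appendColumn]

theorem appendColumn_column_castSucc (j : Fin r) :
    (fun i => appendColumn ν w i j.castSucc) = Fin.snoc (fun i => ν i j) 0 := by
  funext i
  induction i using Fin.lastCases <;> simp

theorem sum_appendColumn_row (i : Fin (r + 1)) :
    ∑ j, appendColumn ν w i j = w i + (Fin.snoc (fun i => ∑ j, ν i j) 0 : Fin (r + 1) → ℕ) i := by
  induction i using Fin.lastCases <;> simp [Fin.sum_univ_castSucc, add_comm]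

end appendColumn

theorem sum_upperTriangularArrays_succ {M : Type*} [AddCommMonoid M] {r : ℕ}
    (k : Fin (r + 1) → ℕ) (G : (Fin (r + 1) → Fin (r + 1) → ℕ) → M) :
    ∑ ν ∈ upperTriangularArrays k, G ν =
      ∑ ν ∈ upperTriangularArrays (fun j => k j.castSucc),
        ∑ w ∈ univ.piAntidiag (k (Fin.last r)), G (appendColumn ν w) := by
  rw [← sum_product']
  symm
  refine sum_bij' (fun p _ => appendColumn p.1 p.2)
    (fun ν _ => (fun i j => ν i.castSucc j.castSucc, fun i => ν i (Fin.last r)))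
    ?_ ?_ ?_ ?_ (fun _ _ => rfl)
  · rintro ⟨ν, w⟩ hp
    simp only [mem_product, mem_upperTriangularArrays, mem_piAntidiag, mem_univ, implies_true,
      and_true] at hp
    obtain ⟨⟨htri, hcol⟩, hw⟩ := hp
    refine mem_upperTriangularArrays.mpr ⟨fun i j hji => ?_, fun j => ?_⟩
    · induction j using Fin.lastCases with
      | last => exact absurd hji (not_lt.mpr (Fin.le_last i))
      | cast j =>
        induction i using Fin.lastCases with
        | last => simp
        | cast i => simpa using htri i j (Fin.castSucc_lt_castSucc_iff.mp hji)
    · induction j using Fin.lastCases with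
      | last => simpa using hw
      | cast j => simpa [Fin.sum_univ_castSucc] using hcol j
  · intro ν hν
    obtain ⟨htri, hcol⟩ := mem_upperTriangularArrays.mp hν
    simp only [mem_product, mem_upperTriangularArrays, mem_piAntidiag, mem_univ, implies_true,
      and_true]
    refine ⟨⟨fun i j hji => htri _ _ (Fin.castSucc_lt_castSucc_iff.mpr hji), fun j => ?_⟩,
      hcol _⟩
    rw [← hcol, Fin.sum_univ_castSucc, htri _ _ (Fin.castSucc_lt_last j), add_zero]
  · intro p _
    simp
  · intro ν hν
    obtain ⟨htri, -⟩ := mem_upperTriangularArrays.mp hν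
    funext i j
    induction j using Fin.lastCases with
    | last => simp
    | cast j =>
      induction i using Fin.lastCases with
      | last => simpa using (htri _ _ (Fin.castSucc_lt_last j)).symm
      | cast i => simp

theorem iterExpr_ofFn_reverse (f : ℚ⟦X⟧) {r : ℕ} (k : Fin r → ℕ) :
    iterExpr f (List.ofFn k).reverse =
      ∑ ν ∈ upperTriangularArrays k,
        (∏ j, Nat.multinomial univ fun i => ν i j) • ∏ i, (d⁄dX ℚ)^[∑ j, ν i j] f := by
  induction r with
  | zero => simp [iterExpr, upperTriangularArrays]
  | succ r ih =>
    have hpow : ∀ n, (⇑(d⁄dX ℚ))^[n] = ⇑((d⁄dX ℚ : ℚ⟦X⟧ →ₗ[ℚ] ℚ⟦X⟧) ^ n) :=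
      fun n => (Module.End.coe_pow _ n).symm
    rw [List.ofFn_succ', List.concat_eq_append, List.reverse_concat, iterExpr, ih,
      derivativeFun_eq_coe_derivative, sum_upperTriangularArrays_succ, mul_sum, hpow, map_sum]
    refine sum_congr rfl fun ν _ => ?_
    have hprod : f * ∏ i, (d⁄dX ℚ)^[∑ j, ν i j] f =
        ∏ i, (d⁄dX ℚ)^[(Fin.snoc (fun i => ∑ j, ν i j) 0 : Fin (r + 1) → ℕ) i] f := by
      simp [Fin.prod_univ_castSucc, mul_comm]
    rw [mul_smul_comm, map_nsmul, hprod, ← hpow, Derivation.iterate_apply_prod, smul_sum]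
    refine sum_congr rfl fun w _ => ?_
    simp only [smul_smul, Fin.prod_univ_castSucc (f := fun j => Nat.multinomial _ _),
      appendColumn_column_castSucc, Nat.multinomial_univ_snoc_zero, sum_appendColumn_row,
      appendColumn_apply_last, Function.iterate_add_apply]

/-- If `F` has, for each `r ≥ 1`, the exponential generating function
`∑ F(k₁,…,k_r) ∏ z_i^{k_i}/k_i! = f(z_r) f(z_{r-1}+z_r) ⋯ f(z₁+⋯+z_r)`
(stated coefficientwise, expanding the right-hand side by the multinomial theorem),
then `F(k₁,…,k_r)` is the constant term of
`∂^{k_r}[ f · ∂^{k_{r-1}}[ f ⋯ ∂^{k₁}[f] ⋯ ] ]`. -/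
theorem genfun_implies_iterated_derivative (a : ℕ → ℚ) (f : PowerSeries ℚ)
    (hf : f = PowerSeries.mk fun k => a k / k.factorial)
    (F : (r : ℕ) → (Fin r → ℕ) → ℚ)
    (hF : ∀ r : ℕ, 1 ≤ r → ∀ k : Fin r → ℕ,
      F r k = ∑ ν ∈ (Fintype.piFinset fun _ : Fin r =>
            Fintype.piFinset fun j : Fin r => Finset.range (k j + 1)).filter
            (fun ν => (∀ i j : Fin r, j < i → ν i j = 0) ∧
              ∀ j : Fin r, (∑ i : Fin r, ν i j) = k j),
          (∏ j : Fin r, (Nat.multinomial Finset.univ (fun i : Fin r => ν i j) : ℚ))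
            * ∏ i : Fin r, a (∑ j : Fin r, ν i j)) :
    ∀ r : ℕ, 1 ≤ r → ∀ k : Fin r → ℕ,
      F r k = PowerSeries.constantCoeff (iterExpr f (List.ofFn k).reverse) := by
  intro r hr k
  have hcoeff (n : ℕ) : constantCoeff ((d⁄dX ℚ)^[n] f) = a n := by
    rw [constantCoeff_iterate_derivative, hf, coeff_mk]
    field_simp
  rw [hF r hr k, iterExpr_ofFn_reverse, map_sum]
  refine sum_congr rfl fun ν _ => ?_
  simp [hcoeff]
end

section
/- Let a : ℕ → ℚ, f(z) = ∑_{k≥0} a(k) z^k/k! ∈ ℚ[[z]], and define F(k₁,…,k_r) as the constant term of ∂_z^{k_r}[ f(z) ∂_z^{k_{r-1}}[ f(z) ··· ∂_z^{k₁}[f(z)] ··· ] ]. Then for r ≥ 2 and k₁,…,k_r ∈ ℕ the recurrence F(k₁,…,k_r) = ∑_{i+j=k_r} C(k_r, i) F(i) · F(k₁,…,k_{r-2}, k_{r-1}+j) holds. -/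
open Finset PowerSeries

theorem Derivation.iterate_leibniz {R A : Type*} [CommSemiring R] [CommSemiring A] [Algebra R A]
    (D : Derivation R A A) (n : ℕ) (a b : A) :
    D^[n] (a * b) = ∑ ij ∈ antidiagonal n, n.choose ij.1 • (D^[ij.1] a * D^[ij.2] b) := by
  induction n with
  | zero => simp
  | succ n ih =>
    rw [sum_antidiagonal_choose_succ_nsmul (fun i j => D^[i] a * D^[j] b) n]
    simp only [Function.iterate_succ_apply', ih, map_sum, map_nsmul, Derivation.leibniz,
      smul_eq_mul, smul_add, sum_add_distrib]
    congr 1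
    refine sum_congr rfl fun ij hij => ?_
    rw [n.choose_symm_of_eq_add (mem_antidiagonal.1 hij).symm, mul_comm]

theorem iterExpr_cons (f : ℚ⟦X⟧) (k : ℕ) (ks : List ℕ) :
    iterExpr f (k :: ks) = (d⁄dX ℚ)^[k] (f * iterExpr f ks) :=
  rfl

theorem iterExpr_singleton (f : ℚ⟦X⟧) (k : ℕ) : iterExpr f [k] = (d⁄dX ℚ)^[k] f := by
  rw [iterExpr_cons, iterExpr, mul_one]

theorem iterated_derivative_recurrence_general (f : PowerSeries ℚ)
    (ks : List ℕ) (km1 kr : ℕ) :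
    PowerSeries.constantCoeff (iterExpr f (kr :: km1 :: ks))
      = ∑ p ∈ Finset.HasAntidiagonal.antidiagonal kr,
          (kr.choose p.1 : ℚ) * PowerSeries.constantCoeff (iterExpr f [p.1])
            * PowerSeries.constantCoeff (iterExpr f ((km1 + p.2) :: ks)) := by
  rw [iterExpr_cons, Derivation.iterate_leibniz, map_sum]
  refine sum_congr rfl fun p _ => ?_
  rw [map_nsmul, map_mul, nsmul_eq_mul, mul_assoc, iterExpr_singleton, iterExpr_cons, iterExpr_cons,
    add_comm km1, Function.iterate_add_apply]

/-- With `f(z) = ∑ a(k) z^k/k!` and `F(k₁,…,k_r)` the constant term of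
`∂^{k_r}[ f · ∂^{k_{r-1}}[ f ⋯ ∂^{k₁}[f] ⋯ ] ]`, the recurrence
`F(k₁,…,k_r) = ∑_{i+j=k_r} C(k_r,i) F(i) F(k₁,…,k_{r-2},k_{r-1}+j)` holds
(here `ks = [k_{r-2},…,k₁]`, `F(i) = a(i)`). -/
theorem iterated_derivative_recurrence (a : ℕ → ℚ) (f : PowerSeries ℚ)
    (hf : f = PowerSeries.mk fun k => a k / k.factorial)
    (ks : List ℕ) (km1 kr : ℕ) :
    PowerSeries.constantCoeff (iterExpr f (kr :: km1 :: ks))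
      = ∑ p ∈ Finset.HasAntidiagonal.antidiagonal kr,
          (kr.choose p.1 : ℚ) * PowerSeries.constantCoeff (iterExpr f [p.1])
            * PowerSeries.constantCoeff (iterExpr f ((km1 + p.2) :: ks)) :=
  iterated_derivative_recurrence_general f ks km1 kr
end

section
/- Define Z(k;t) := (1-k)·Li_k(t) + (log t)·Li_{k-1}(t) for k ∈ ℤ and 0 < t < 1. Then for every integer k ≤ 0 one has lim_{t→1⁻} Z(k;t) = (1-k)·ζ(k), where ζ(k) is the value of the analytically continued Riemann zeta function; e.g. for k = 0 the limit is -1/2. -/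
/-!
With `u = -log t`, one has `Li_{-m}(t) = ∑_{n ≥ 1} n^m e^{-nu} = (-d/du)^m (e^u - 1)⁻¹`, and the
combination `Z(-m; t)` is exactly `(-1)^m` times the `(m+1)`-st derivative of `u / (e^u - 1)`.
That function extends analytically across `u = 0`, where its Taylor coefficients are the
Bernoulli numbers, so the limit `t → 1⁻` (i.e. `u → 0⁺`) is `(-1)^m B_{m+1} = (1 + m) ζ(-m)`.
-/

open Filter Set

/-- The polylogarithm `Li_k(t) = ∑_{n≥1} tⁿ/n^k`, `k ∈ ℤ`. -/
noncomputable def Li (k : ℤ) (t : ℝ) : ℝ := ∑' n : ℕ, t ^ (n + 1) / ((n : ℝ) + 1) ^ k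

/-- The depth-1 combination `Z(k;t) = (1-k) Li_k(t) + (log t) Li_{k-1}(t)`. -/
noncomputable def Zdes (k : ℤ) (t : ℝ) : ℝ := (1 - (k : ℝ)) * Li k t + Real.log t * Li (k - 1) t

theorem AnalyticOnNhd.dslope {𝕜 E : Type*} [NontriviallyNormedField 𝕜] [NormedAddCommGroup E]
    [NormedSpace 𝕜 E] {f : 𝕜 → E} {s : Set 𝕜} (hf : AnalyticOnNhd 𝕜 f s) (a : 𝕜) :
    AnalyticOnNhd 𝕜 (dslope f a) s := by
  intro b hb
  rcases eq_or_ne b a with rfl | hba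
  · obtain ⟨p, hp⟩ := hf b hb
    exact hp.has_fpower_series_dslope_fslope.analyticAt
  · rw [analyticAt_congr (dslope_eventuallyEq_slope_of_ne f hba)]
    have hsub : AnalyticAt 𝕜 (fun x => x - a) b := by fun_prop
    exact (hsub.inv (sub_ne_zero.2 hba)).smul ((hf b hb).sub analyticAt_const)

/-- `u / (e^u - 1)`, with its removable singularity at `u = 0` filled in by the value `1`. -/
noncomputable def bernoulliGenFun (u : ℝ) : ℝ := (dslope Real.exp 0 u)⁻¹

theorem dslope_exp_zero_ne_zero (u : ℝ) : dslope Real.exp 0 u ≠ 0 := by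
  rcases eq_or_ne u 0 with rfl | hu
  · simp [dslope_same]
  · rw [dslope_of_ne _ hu, slope_def_field, Real.exp_zero, sub_zero]
    exact div_ne_zero (by simpa [sub_eq_zero] using hu) hu

theorem contDiff_bernoulliGenFun : ContDiff ℝ ⊤ bernoulliGenFun :=
  AnalyticOnNhd.contDiff fun u _ =>
    (analyticOnNhd_rexp.dslope 0 u trivial).inv (dslope_exp_zero_ne_zero u)

theorem bernoulliGenFun_mul_exp_sub_one (u : ℝ) : bernoulliGenFun u * (Real.exp u - 1) = u := by
  have h := sub_smul_dslope Real.exp 0 u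
  rw [smul_eq_mul, sub_zero, Real.exp_zero] at h
  rw [bernoulliGenFun, ← h, mul_left_comm, inv_mul_cancel₀ (dslope_exp_zero_ne_zero u), mul_one]

theorem iteratedDeriv_exp_sub_one_zero (n : ℕ) :
    iteratedDeriv n (fun u => Real.exp u - 1) 0 = if n = 0 then 0 else 1 := by
  rw [iteratedDeriv_fun_sub Real.contDiff_exp.contDiffAt contDiffAt_const, iteratedDeriv_const,
    iteratedDeriv_eq_iterate, Real.iter_deriv_exp]
  split_ifs <;> simp

theorem sum_choose_mul_iteratedDeriv_bernoulliGenFun_zero (n : ℕ) :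
    ∑ i ∈ Finset.range (n + 1), ((n + 1).choose i : ℝ) * iteratedDeriv i bernoulliGenFun 0 =
      if n = 0 then 1 else 0 := by
  -- Leibniz rule for `bernoulliGenFun u * (exp u - 1) = u` at `u = 0`
  have h := iteratedDeriv_fun_mul (n := n + 1) (x := (0 : ℝ)) (g := fun u => Real.exp u - 1)
    (contDiff_bernoulliGenFun.contDiffAt.of_le le_top)
    (Real.contDiff_exp.sub contDiff_const).contDiffAt
  simp only [bernoulliGenFun_mul_exp_sub_one, iteratedDeriv_fun_id_zero,
    iteratedDeriv_exp_sub_one_zero, Finset.sum_range_succ _ (n + 1)] at h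
  rw [Finset.sum_congr rfl fun i hi => by
    rw [if_neg (by simp at hi; omega), mul_one]] at h
  simpa using h.symm

theorem iteratedDeriv_bernoulliGenFun_zero (n : ℕ) :
    iteratedDeriv n bernoulliGenFun 0 = bernoulli n := by
  induction n using Nat.strong_induction_on with
  | _ n ih =>
  have hB : ∑ i ∈ Finset.range (n + 1), ((n + 1).choose i : ℝ) * (bernoulli i : ℝ) =
      if n = 0 then 1 else 0 := by
    have h := congrArg (Rat.cast : ℚ → ℝ) (sum_bernoulli (n + 1))
    push_cast at h
    rw [h]
    split_ifs <;> simp_all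
  have h := (sum_choose_mul_iteratedDeriv_bernoulliGenFun_zero n).trans hB.symm
  rw [Finset.sum_range_succ, Finset.sum_range_succ, Finset.sum_congr rfl fun i hi => by
    rw [ih i (Finset.mem_range.1 hi)], add_right_inj] at h
  exact mul_left_cancel₀ (by simp [Nat.cast_add_one_ne_zero]) h

noncomputable def powExpSum (m : ℕ) (u : ℝ) : ℝ :=
  ∑' n : ℕ, ((n : ℝ) + 1) ^ m * Real.exp (-(((n : ℝ) + 1) * u))

theorem powExpSum_term_eq (m : ℕ) (u : ℝ) (n : ℕ) :
    ((n : ℝ) + 1) ^ m * Real.exp (-(((n : ℝ) + 1) * u)) =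
      ((n + 1 : ℕ) : ℝ) ^ m * Real.exp (-u) ^ (n + 1) := by
  rw [← Real.exp_nat_mul]
  push_cast
  ring_nf

theorem summable_powExpSum (m : ℕ) {u : ℝ} (hu : 0 < u) :
    Summable fun n : ℕ => ((n : ℝ) + 1) ^ m * Real.exp (-(((n : ℝ) + 1) * u)) := by
  have hr : ‖Real.exp (-u)‖ < 1 := by
    rw [Real.norm_of_nonneg (Real.exp_pos _).le, Real.exp_lt_one_iff]
    linarith
  have h := (summable_nat_add_iff (f := fun n : ℕ => (n : ℝ) ^ m * Real.exp (-u) ^ n) 1).2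
    (summable_pow_mul_geometric_of_norm_lt_one m hr)
  exact h.congr fun n => (powExpSum_term_eq m u n).symm

theorem powExpSum_zero {u : ℝ} (hu : 0 < u) : powExpSum 0 u = (Real.exp u - 1)⁻¹ := by
  have hr : Real.exp (-u) < 1 := Real.exp_lt_one_iff.2 (by linarith)
  have h : powExpSum 0 u = ∑' n : ℕ, Real.exp (-u) * Real.exp (-u) ^ n := by
    refine tsum_congr fun n => ?_
    rw [powExpSum_term_eq, pow_succ']
    simp
  rw [h, tsum_mul_left, tsum_geometric_of_lt_one (Real.exp_pos _).le hr, Real.exp_neg]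
  have : Real.exp u - 1 ≠ 0 := by linarith [Real.add_one_lt_exp hu.ne']
  field_simp

theorem hasDerivAt_powExpSum (m : ℕ) {u : ℝ} (hu : 0 < u) :
    HasDerivAt (powExpSum m) (-powExpSum (m + 1) u) u := by
  have hterm (n : ℕ) (y : ℝ) :
      HasDerivAt (fun y => ((n : ℝ) + 1) ^ m * Real.exp (-(((n : ℝ) + 1) * y)))
        (-(((n : ℝ) + 1) ^ (m + 1) * Real.exp (-(((n : ℝ) + 1) * y)))) y := by
    have hlin : HasDerivAt (fun y : ℝ => -(((n : ℝ) + 1) * y)) (-((n : ℝ) + 1)) y := by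
      simpa using ((hasDerivAt_id y).const_mul ((n : ℝ) + 1)).fun_neg
    exact (hlin.exp.const_mul _).congr_deriv (by ring)
  rw [powExpSum, ← tsum_neg]
  -- the derivatives are dominated on `(u/2, ∞)` by the summable series at `u/2`
  refine hasDerivAt_tsum_of_isPreconnected (summable_powExpSum (m + 1) (half_pos hu))
    isOpen_Ioi isPreconnected_Ioi (fun n y _ => hterm n y) (fun n y hy => ?_)
    (mem_Ioi.2 (half_lt_self hu)) (summable_powExpSum m hu) (mem_Ioi.2 (half_lt_self hu))
  rw [norm_neg, Real.norm_of_nonneg (by positivity)]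
  gcongr
  exact le_of_lt hy

theorem bernoulliGenFun_eq_mul_powExpSum_zero {u : ℝ} (hu : 0 < u) :
    bernoulliGenFun u = u * powExpSum 0 u := by
  have hne : Real.exp u - 1 ≠ 0 := by linarith [Real.add_one_lt_exp hu.ne']
  rw [powExpSum_zero hu, ← div_eq_mul_inv, eq_div_iff hne, bernoulliGenFun_mul_exp_sub_one]

theorem iteratedDeriv_succ_bernoulliGenFun_of_pos (n : ℕ) {u : ℝ} (hu : 0 < u) :
    iteratedDeriv (n + 1) bernoulliGenFun u =
      (-1) ^ n * ((n + 1) * powExpSum n u - u * powExpSum (n + 1) u) := by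
  induction n generalizing u with
  | zero =>
    have hG : bernoulliGenFun =ᶠ[nhds u] fun v => v * powExpSum 0 v :=
      eventually_of_mem (Ioi_mem_nhds hu) fun v hv => bernoulliGenFun_eq_mul_powExpSum_zero hv
    rw [iteratedDeriv_one, hG.deriv_eq,
      ((hasDerivAt_id' u).fun_mul (hasDerivAt_powExpSum 0 hu)).deriv]
    ring
  | succ n ih =>
    have hG : iteratedDeriv (n + 1) bernoulliGenFun =ᶠ[nhds u]
        fun v => (-1) ^ n * ((n + 1) * powExpSum n v - v * powExpSum (n + 1) v) :=
      eventually_of_mem (Ioi_mem_nhds hu) fun v hv => ih hv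
    rw [iteratedDeriv_succ, hG.deriv_eq, ((((hasDerivAt_powExpSum n hu).const_mul _).fun_sub
      ((hasDerivAt_id' u).fun_mul (hasDerivAt_powExpSum (n + 1) hu))).const_mul _).deriv]
    push_cast
    ring

theorem Li_neg_natCast_eq_powExpSum (m : ℕ) {t : ℝ} (ht : 0 < t) :
    Li (-(m : ℤ)) t = powExpSum m (-Real.log t) := by
  refine tsum_congr fun n => ?_
  rw [zpow_neg, zpow_natCast, div_inv_eq_mul, mul_neg, neg_neg, ← Nat.cast_add_one,
    Real.exp_nat_mul, Real.exp_log ht, mul_comm]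

theorem Zdes_neg_natCast_eq_iteratedDeriv_bernoulliGenFun (m : ℕ) {t : ℝ} (ht : t ∈ Ioo 0 1) :
    Zdes (-(m : ℤ)) t = (-1) ^ m * iteratedDeriv (m + 1) bernoulliGenFun (-Real.log t) := by
  have hu : 0 < -Real.log t := neg_pos.2 (Real.log_neg ht.1 ht.2)
  have hLi : Li (-(m : ℤ) - 1) t = powExpSum (m + 1) (-Real.log t) := by
    rw [← Li_neg_natCast_eq_powExpSum (m + 1) ht.1]
    push_cast
    ring_nf
  rw [Zdes, Li_neg_natCast_eq_powExpSum m ht.1, hLi,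
    iteratedDeriv_succ_bernoulliGenFun_of_pos m hu, ← mul_assoc, ← mul_pow, neg_one_mul, neg_neg,
    one_pow, one_mul]
  push_cast
  ring

theorem one_sub_mul_riemannZeta_neg_natCast (m : ℕ) :
    (1 - ((-m : ℤ) : ℂ)) * riemannZeta ((-m : ℤ) : ℂ) =
      (((-1) ^ m * bernoulli (m + 1) : ℝ) : ℂ) := by
  push_cast
  rw [riemannZeta_neg_nat_eq_bernoulli]
  field_simp
  ring

/-- For every integer `k ≤ 0`, `lim_{t→1⁻} Z(k;t) = (1-k)·ζ(k)` (value of the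
analytically continued Riemann zeta function). -/
theorem tendsto_Zdes_nonpos (k : ℤ) (hk : k ≤ 0) :
    Tendsto (fun t : ℝ => ((Zdes k t : ℝ) : ℂ))
      (nhdsWithin 1 (Set.Ioo 0 1)) (nhds ((1 - (k : ℂ)) * riemannZeta k)) := by
  obtain ⟨m, rfl⟩ : ∃ m : ℕ, k = -(m : ℤ) := ⟨k.natAbs, by omega⟩
  have hlog : Tendsto (fun t => -Real.log t) (nhdsWithin 1 (Ioo 0 1)) (nhds 0) := by
    simpa using ((Real.continuousAt_log one_ne_zero).tendsto.neg).mono_left nhdsWithin_le_nhds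
  have hderiv :=
    ((contDiff_bernoulliGenFun.continuous_iteratedDeriv (m + 1) le_top).tendsto 0).comp hlog
  rw [iteratedDeriv_bernoulliGenFun_zero] at hderiv
  rw [one_sub_mul_riemannZeta_neg_natCast]
  refine (Complex.continuous_ofReal.tendsto _).comp ((hderiv.const_mul ((-1) ^ m)).congr' ?_)
  filter_upwards [self_mem_nhdsWithin] with t ht
  exact (Zdes_neg_natCast_eq_iteratedDeriv_bernoulliGenFun m ht).symm
end
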